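/- Let p ≥ 3 be a prime and k ∈ ℕ₊, and suppose the sequence (ν_p(A_{p,k}(n)))_{n∈ℕ} is eventually constant and equal to 1. If (p−1) | k, then p ∤ k. -/

import Mathlib

open PowerSeries Finset

/-- The number of digits equal to `i` in the base-`p` representation of `n`. -/
def Np (p i n : ℕ) : ℕ := (Nat.digits p n).count i

/-- `Dcoef p r n` is the coefficient of `x^n` in `∏_{i=0}^∞ (1 - x^{p^i})^r`.
Since `p ≥ 2`, the factors with index `i > n` do not affect the coefficient of `x^n`,
so the product may be truncated at `i = n`. -/
noncomputable def Dcoef (p r n : ℕ) : ℤ :=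
  PowerSeries.coeff (R := ℤ) n (∏ i ∈ Finset.range (n + 1), (1 - PowerSeries.X ^ p ^ i) ^ r)

/-- `Dp p n = D_{p,p-1}(n)`. -/
noncomputable def Dp (p n : ℕ) : ℤ := Dcoef p (p - 1) n

/-- `Acoef m k n` is the coefficient of `x^n` in `∏_{i=0}^∞ (1 - x^{m^i})^{-k}`,
the number of `k`-colored `m`-ary partitions of `n`.  Here `(1 - X^{m^i})⁻¹` is
realized as `PowerSeries.invOfUnit (1 - X ^ m ^ i) 1`, and since `m ≥ 2` the factors
with index `i > n` do not affect the coefficient of `x^n`. -/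
noncomputable def Acoef (m k n : ℕ) : ℤ :=
  PowerSeries.coeff (R := ℤ) n
    (∏ i ∈ Finset.range (n + 1),
      (PowerSeries.invOfUnit (1 - PowerSeries.X ^ m ^ i) 1) ^ k)

/-!
Write `k = p (p - 1) t`. Modulo `p`, the Frobenius telescopes
`(1 - x) ∏_{i<m} (1 - x^{p^i})^{p-1} ≡ 1 - x^{p^m}`; raising the `t`-th power of this congruence
to the `p`-th power makes it hold modulo `p²`. In degrees below `p^m` it therefore says that
`∏_i (1 - x^{p^i})^{-k} ≡ (1 - x)^{pt} (mod p²)`, a polynomial of degree `pt`. Hence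
`p² ∣ A_{p,k}(n)` for every `n > pt`, so `ν_p(A_{p,k}(n))` cannot be eventually `1`.
-/

section Congruences

variable {S : Type*} [CommRing S] {p : ℕ}

theorem prime_dvd_one_sub_pow_sub_one_sub_pow (hp : p.Prime) (y : S) :
    (p : S) ∣ (1 - y) ^ p - (1 - y ^ p) := by
  -- expand `1 = ((1 - y) + y) ^ p`
  obtain ⟨r, hr⟩ := exists_add_pow_prime_eq hp (1 - y) y
  rw [sub_add_cancel, one_pow] at hr
  exact ⟨-((1 - y) * y * r), by linear_combination -hr⟩

theorem prime_dvd_one_sub_mul_prod_sub (hp : p.Prime) (x : S) (m : ℕ) :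
    (p : S) ∣ (1 - x) * ∏ i ∈ range m, (1 - x ^ p ^ i) ^ (p - 1) - (1 - x ^ p ^ m) := by
  induction m with
  | zero => simp
  | succ m ih =>
    have hpow : (1 - x ^ p ^ m) ^ p = (1 - x ^ p ^ m) ^ (p - 1) * (1 - x ^ p ^ m) := by
      rw [← pow_succ, Nat.sub_add_cancel hp.one_lt.le]
    have key : (1 - x) * ∏ i ∈ range (m + 1), (1 - x ^ p ^ i) ^ (p - 1) - (1 - x ^ p ^ (m + 1))
        = ((1 - x) * ∏ i ∈ range m, (1 - x ^ p ^ i) ^ (p - 1) - (1 - x ^ p ^ m))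
            * (1 - x ^ p ^ m) ^ (p - 1)
          + ((1 - x ^ p ^ m) ^ p - (1 - (x ^ p ^ m) ^ p)) := by
      rw [prod_range_succ, pow_succ p m, pow_mul, hpow]
      ring
    rw [key]
    exact dvd_add (dvd_mul_of_dvd_left ih _) (prime_dvd_one_sub_pow_sub_one_sub_pow hp _)

theorem prime_sq_dvd_one_sub_pow_mul_prod_sub (hp : p.Prime) (x : S) (m t : ℕ) :
    (p : S) ^ 2 ∣ (1 - x) ^ (p * t) * ∏ i ∈ range m, (1 - x ^ p ^ i) ^ (p * (p - 1) * t)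
      - (1 - x ^ p ^ m) ^ (p * t) := by
  have hmodp := (prime_dvd_one_sub_mul_prod_sub hp x m).trans (sub_dvd_pow_sub_pow _ _ t)
  rw [show p * (p - 1) * t = (p - 1) * t * p by ring, mul_comm p t]
  simpa only [pow_one, ← pow_mul, mul_pow, ← prod_pow] using dvd_sub_pow_of_dvd_sub hmodp 1

end Congruences

theorem coeff_one_sub_X_pow_of_lt {R : Type*} [CommRing R] {s n : ℕ} (hn : s < n) :
    coeff n ((1 - X : R⟦X⟧) ^ s) = 0 := by
  induction s generalizing n with
  | zero => rw [pow_zero, coeff_one, if_neg hn.ne']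
  | succ s ih =>
    obtain ⟨n, rfl⟩ : ∃ j, n = j + 1 := ⟨n - 1, by omega⟩
    rw [pow_succ, mul_sub, mul_one, map_sub, coeff_succ_mul_X, ih (by omega), ih (by omega),
      sub_zero]

theorem prime_sq_dvd_coeff_prod_invOfUnit {p : ℕ} (hp : p.Prime) {m t n : ℕ}
    (hpt : p * t < n) (hnm : n < p ^ m) :
    (p : ℤ) ^ 2 ∣ coeff n
      (∏ i ∈ range m, (invOfUnit (1 - X ^ p ^ i : ℤ⟦X⟧) 1) ^ (p * (p - 1) * t)) := by
  set G := ∏ i ∈ range m, (invOfUnit (1 - X ^ p ^ i : ℤ⟦X⟧) 1) ^ (p * (p - 1) * t)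
  have hG : (∏ i ∈ range m, (1 - X ^ p ^ i : ℤ⟦X⟧) ^ (p * (p - 1) * t)) * G = 1 := by
    rw [← prod_mul_distrib]
    refine prod_eq_one fun i _ ↦ ?_
    rw [← mul_pow, mul_invOfUnit _ _ (by simp [hp.ne_zero]), one_pow]
  obtain ⟨c, hc⟩ := prime_sq_dvd_one_sub_pow_mul_prod_sub hp (X : ℤ⟦X⟧) m t
  obtain ⟨d, hd⟩ := one_sub_dvd_one_sub_pow (1 - X ^ p ^ m : ℤ⟦X⟧) (p * t)
  have hcongr : (1 - X) ^ (p * t) - G + X ^ p ^ m * d * G = (p : ℤ⟦X⟧) ^ 2 * (c * G) := by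
    linear_combination G * hc - G * hd - (1 - X) ^ (p * t) * hG
  have hcoeff := congrArg (coeff n) hcongr
  rw [map_add, map_sub, coeff_one_sub_X_pow_of_lt hpt, mul_assoc, coeff_X_pow_mul',
    if_neg (not_le.mpr hnm), ← map_natCast (C (R := ℤ)), ← map_pow, coeff_C_mul] at hcoeff
  exact ⟨-coeff n (c * G), by linear_combination -hcoeff⟩

theorem stmt18_general (p k : ℕ) (hp : p.Prime)
    (hev : ∃ N : ℕ, ∀ n : ℕ, N ≤ n → emultiplicity (p : ℤ) (Acoef p k n) = 1)
    (hdvd : (p - 1) ∣ k) : ¬ p ∣ k := by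
  intro hpk
  obtain ⟨N, hN⟩ := hev
  have hcop : Nat.Coprime p (p - 1) :=
    (Nat.coprime_self_sub_right hp.one_lt.le).mpr (Nat.coprime_one_right p)
  obtain ⟨t, rfl⟩ := hcop.mul_dvd_of_dvd_of_dvd hpk hdvd
  set n := max N (p * t + 1)
  have hsq : (p : ℤ) ^ 2 ∣ Acoef p (p * (p - 1) * t) n :=
    prime_sq_dvd_coeff_prod_invOfUnit hp (by omega)
      ((Nat.lt_pow_self hp.one_lt).trans (Nat.pow_lt_pow_succ hp.one_lt))
  have h2le := le_emultiplicity_of_pow_dvd hsq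
  rw [hN n (le_max_left _ _)] at h2le
  norm_num at h2le

theorem stmt18 (p k : ℕ) (hp : p.Prime) (hp3 : 3 ≤ p) (hk : 1 ≤ k)
    (hev : ∃ N : ℕ, ∀ n : ℕ, N ≤ n → emultiplicity (p : ℤ) (Acoef p k n) = 1)
    (hdvd : (p - 1) ∣ k) : ¬ p ∣ k :=
  stmt18_general p k hp hev hdvd
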